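/- arXiv:2002.08691 — 4 statements merged into one kernel-verified Lean document; each statement's English description precedes it below -/
import Mathlib

section
/- Let B be an associative unital ring with no zero divisors (a domain), S ⊆ B \ {0} a multiplicatively closed subset, and A a domain containing B as a subring such that every element of S is invertible in A and every element of A can be written both in the form s⁻¹b and in the form b′(s′)⁻¹ with s, s′ ∈ S and b, b′ ∈ B. Let L₀ ∈ B be locally ad-nilpotent in B, i.e. for every b ∈ B there is n ≥ 0 with ad_{L₀}ⁿ(b) = 0. Then for any L ∈ A the following three conditions are equivalent: (a) there exists a nonzero D ∈ A with L·D = D·L₀; (b) there exists a nonzero D* ∈ A with D*·L = L₀·D*; (c) there exist δ ∈ S and N ≥ 0 with ad_{L,L₀}^{N+1}(δ) = 0. -/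
/-!
If some `ad_{a,b}ⁿ` kills a nonzero `x`, the last nonzero iterate `y` satisfies `a y = y b`;
this gives (c) ⇒ (a), and also (a) ⇒ (b) once we have a nonzero `δ` with `ad_{L₀,L}ⁿ δ = 0`.
Such `δ` come from the twisted Leibniz rules: if `L D = D L₀` then
`ad_{L₀}ⁿ(δ D) = ad_{L₀,L}ⁿ(δ) D`, and if `D L = L₀ D` then `ad_{L₀}ⁿ(D δ) = D ad_{L,L₀}ⁿ(δ)`.
Choosing `δ ∈ S` with `δ D ∈ B` (resp. `D δ ∈ B`), local nilpotency of `ad_{L₀}` on `B` makes the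
left-hand side vanish, and cancelling `D ≠ 0` in the domain `A` gives (a) ⇒ (b) and (b) ⇒ (c).
-/

def adOp {A : Type*} [Ring A] (a b : A) : A → A := fun x => a * x - x * b

theorem Function.exists_ne_zero_apply_eq_zero_of_iterate_eq_zero {M : Type*} [Zero M]
    {f : M → M} {x : M} (hx : x ≠ 0) {n : ℕ} (hn : f^[n] x = 0) : ∃ y ≠ 0, f y = 0 := by
  induction n with
  | zero => exact absurd hn hx
  | succ n ih =>
    by_cases h : f^[n] x = 0
    · exact ih h
    · exact ⟨_, h, by rwa [← Function.iterate_succ_apply' f n x]⟩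

section

variable {A : Type*} [Ring A] {a b c x y : A}

@[simp]
theorem adOp_zero : adOp a b 0 = 0 := by
  simp [adOp]

theorem adOp_eq_zero_iff : adOp a b x = 0 ↔ a * x = x * b :=
  sub_eq_zero

theorem exists_ne_zero_mul_eq_mul_of_iterate_adOp_eq_zero (hx : x ≠ 0) {n : ℕ}
    (hn : (adOp a b)^[n] x = 0) : ∃ y ≠ 0, a * y = y * b := by
  obtain ⟨y, hy, hy0⟩ := Function.exists_ne_zero_apply_eq_zero_of_iterate_eq_zero hx hn
  exact ⟨y, hy, adOp_eq_zero_iff.mp hy0⟩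

theorem iterate_adOp_mul_of_mul_eq_mul_right (h : c * y = y * b) (n : ℕ) :
    (adOp a b)^[n] (x * y) = (adOp a c)^[n] x * y := by
  induction n with
  | zero => rfl
  | succ n ih =>
    rw [Function.iterate_succ_apply', Function.iterate_succ_apply', ih]
    show a * (_ * y) - _ * y * b = (a * _ - _ * c) * y
    rw [mul_assoc _ y b, ← h]
    noncomm_ring

theorem iterate_adOp_mul_of_mul_eq_mul_left (h : a * x = x * c) (n : ℕ) :
    (adOp a b)^[n] (x * y) = x * (adOp c b)^[n] y := by
  induction n with
  | zero => rfl
  | succ n ih =>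
    rw [Function.iterate_succ_apply', Function.iterate_succ_apply', ih]
    show a * (x * _) - x * _ * b = x * (c * _ - _ * b)
    rw [← mul_assoc a x, h]
    noncomm_ring

variable [NoZeroDivisors A] {n : ℕ}

theorem iterate_adOp_eq_zero_of_mul_eq_mul_right (h : c * y = y * b) (hy : y ≠ 0)
    (hn : (adOp a b)^[n] (x * y) = 0) : (adOp a c)^[n] x = 0 := by
  rw [iterate_adOp_mul_of_mul_eq_mul_right h] at hn
  exact (mul_eq_zero.mp hn).resolve_right hy

theorem iterate_adOp_eq_zero_of_mul_eq_mul_left (h : a * x = x * c) (hx : x ≠ 0)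
    (hn : (adOp a b)^[n] (x * y) = 0) : (adOp c b)^[n] y = 0 := by
  rw [iterate_adOp_mul_of_mul_eq_mul_left h] at hn
  exact (mul_eq_zero.mp hn).resolve_left hx

end

theorem stmt0_general {A : Type*} [Ring A] [IsDomain A]
    (B : Subring A)
    (S : Set A) (hS0 : (0 : A) ∉ S)
    (hleft : ∀ a : A, ∃ s ∈ S, s * a ∈ B)
    (hright : ∀ a : A, ∃ s ∈ S, a * s ∈ B)
    (L₀ : A)
    (hnil : ∀ b ∈ B, ∃ n : ℕ, (adOp L₀ L₀)^[n] b = 0)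
    (L : A) :
    ((∃ D : A, D ≠ 0 ∧ L * D = D * L₀) ↔
      (∃ δ ∈ S, ∃ N : ℕ, (adOp L L₀)^[N + 1] δ = 0)) ∧
    ((∃ Dstar : A, Dstar ≠ 0 ∧ Dstar * L = L₀ * Dstar) ↔
      (∃ δ ∈ S, ∃ N : ℕ, (adOp L L₀)^[N + 1] δ = 0)) := by
  have hS : ∀ δ ∈ S, δ ≠ 0 := fun δ hδ h => hS0 (h ▸ hδ)
  have c_to_a : (∃ δ ∈ S, ∃ N : ℕ, (adOp L L₀)^[N + 1] δ = 0) →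
      ∃ D : A, D ≠ 0 ∧ L * D = D * L₀ := by
    rintro ⟨δ, hδ, N, hN⟩
    exact exists_ne_zero_mul_eq_mul_of_iterate_adOp_eq_zero (hS δ hδ) hN
  have a_to_b : (∃ D : A, D ≠ 0 ∧ L * D = D * L₀) →
      ∃ Dstar : A, Dstar ≠ 0 ∧ Dstar * L = L₀ * Dstar := by
    rintro ⟨D, hD0, hD⟩
    obtain ⟨δ, hδ, hδD⟩ := hleft D
    obtain ⟨n, hn⟩ := hnil _ hδD
    obtain ⟨Dstar, hDstar0, hDstar⟩ :=
      exists_ne_zero_mul_eq_mul_of_iterate_adOp_eq_zero (hS δ hδ)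
        (iterate_adOp_eq_zero_of_mul_eq_mul_right hD hD0 hn)
    exact ⟨Dstar, hDstar0, hDstar.symm⟩
  have b_to_c : (∃ Dstar : A, Dstar ≠ 0 ∧ Dstar * L = L₀ * Dstar) →
      ∃ δ ∈ S, ∃ N : ℕ, (adOp L L₀)^[N + 1] δ = 0 := by
    rintro ⟨D, hD0, hD⟩
    obtain ⟨δ, hδ, hDδ⟩ := hright D
    obtain ⟨n, hn⟩ := hnil _ hDδ
    refine ⟨δ, hδ, n, ?_⟩
    rw [Function.iterate_succ_apply', iterate_adOp_eq_zero_of_mul_eq_mul_left hD.symm hD0 hn,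
      adOp_zero]
  exact ⟨⟨b_to_c ∘ a_to_b, c_to_a⟩, ⟨b_to_c, a_to_b ∘ c_to_a⟩⟩

/-- Lemma 4.1 (shiftl): for a locally ad-nilpotent `L₀ ∈ B` and `L` in the Ore localization
`A = B[S⁻¹]`, existence of a right shift operator, of a left shift operator, and
ad-nilpotency of some `δ ∈ S` under `ad_{L,L₀}` are all equivalent. -/
theorem stmt0 {A : Type*} [Ring A] [IsDomain A]
    (B : Subring A)
    (S : Set A) (hSB : S ⊆ (B : Set A)) (hS0 : (0 : A) ∉ S)
    (hSmul : ∀ s ∈ S, ∀ t ∈ S, s * t ∈ S)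
    (hSunit : ∀ s ∈ S, IsUnit s)
    (hleft : ∀ a : A, ∃ s ∈ S, s * a ∈ B)
    (hright : ∀ a : A, ∃ s ∈ S, a * s ∈ B)
    (L₀ : A) (hL₀ : L₀ ∈ B)
    (hnil : ∀ b ∈ B, ∃ n : ℕ, (adOp L₀ L₀)^[n] b = 0)
    (L : A) :
    ((∃ D : A, D ≠ 0 ∧ L * D = D * L₀) ↔
      (∃ δ ∈ S, ∃ N : ℕ, (adOp L L₀)^[N + 1] δ = 0)) ∧
    ((∃ Dstar : A, Dstar ≠ 0 ∧ Dstar * L = L₀ * Dstar) ↔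
      (∃ δ ∈ S, ∃ N : ℕ, (adOp L L₀)^[N + 1] δ = 0)) :=
  stmt0_general B S hS0 hleft hright L₀ hnil L
end

section
/- Let k be a field of characteristic zero, B an associative unital k-algebra that is a domain, S ⊆ B \ {0} a multiplicatively closed subset whose elements pairwise commute, and A a k-algebra domain containing B as a subalgebra such that every element of S is invertible in A and every element of A can be written both as s⁻¹b and as b′(s′)⁻¹ with s, s′ ∈ S and b, b′ ∈ B. Let L₀ ∈ B be locally ad-nilpotent in B, and for nonzero b ∈ B set deg_{L₀}(b) := min{n ≥ 0 : ad_{L₀}^{n+1}(b) = 0}. Then there is a unique function deg : A \ {0} → ℤ such that (0) deg(b) = deg_{L₀}(b) for all nonzero b ∈ B, and (1) deg(a₁a₂) = deg(a₁) + deg(a₂) for all nonzero a₁, a₂ ∈ A. Moreover, this function satisfies (2) deg(a₁ + a₂) ≤ max(deg(a₁), deg(a₂)) whenever a₁, a₂ and a₁ + a₂ are nonzero, and (3) deg(ad_{L₀}(a)) ≤ deg(a) − 1 whenever a and ad_{L₀}(a) are nonzero. -/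
/-- The ad-nilpotency degree of `b` with respect to `L₀`:
the smallest `n` with `ad_{L₀}^[n+1] b = 0`. -/
noncomputable def degAd {A : Type*} [Ring A] (L₀ b : A) : ℕ :=
  sInf {n : ℕ | (adOp L₀ L₀)^[n + 1] b = 0}

/-!
By the Leibniz rule, `ad^{m+n} (x y) = C(m+n, m) • ad^m x * ad^n y` when `m = degAd L₀ x` and
`n = degAd L₀ y`, and this is nonzero in a domain of characteristic zero; so `degAd L₀` is
multiplicative on `B`. Every `a ∈ A` is a left fraction `s⁻¹ b`, which forces
`deg a = deg b - deg s`. Clearing the denominator of `r t⁻¹` gives the Ore relation `v r = c t`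
inside `B`, which shows that this value does not depend on the fraction and is multiplicative.
Subadditivity follows over a common denominator, and the drop under `ad` from
`s * ad a = ad (s a) - ad s * a`.
-/

open Finset

theorem iterate_map_mul_of_leibniz {R : Type*} [NonUnitalNonAssocSemiring R] (δ : R →+ R)
    (hδ : ∀ x y, δ (x * y) = δ x * y + x * δ y) (n : ℕ) (x y : R) :
    δ^[n] (x * y) = ∑ ij ∈ antidiagonal n, n.choose ij.1 • (δ^[ij.1] x * δ^[ij.2] y) := by
  induction n with
  | zero => simp
  | succ n ih =>
    rw [sum_antidiagonal_choose_succ_nsmul (fun i j => δ^[i] x * δ^[j] y) n]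
    simp only [Function.iterate_succ_apply', ih, map_sum, map_nsmul, hδ, smul_add,
      sum_add_distrib]
    rw [add_comm]
    congr 1
    refine sum_congr rfl fun ⟨i, j⟩ hij => ?_
    rw [n.choose_symm_of_eq_add (HasAntidiagonal.mem_antidiagonal.1 hij).symm]

section AdOperator

variable {A : Type*} [Ring A] {L₀ : A}

local notation "D" => adOp L₀ L₀

variable (L₀) in
def adAddMonoidHom : A →+ A := AddMonoidHom.mulLeft L₀ - AddMonoidHom.mulRight L₀

theorem coe_adAddMonoidHom : ⇑(adAddMonoidHom L₀) = D := rfl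

theorem adOp_mul (x y : A) : D (x * y) = D x * y + x * D y := by
  simp only [adOp]; noncomm_ring

theorem iterate_adOp_mul (n : ℕ) (x y : A) :
    D^[n] (x * y) = ∑ ij ∈ antidiagonal n, n.choose ij.1 • (D^[ij.1] x * D^[ij.2] y) := by
  rw [← coe_adAddMonoidHom]
  exact iterate_map_mul_of_leibniz _ adOp_mul n x y

theorem iterate_adOp_eq_zero_of_le {b : A} {m n : ℕ} (hm : D^[m] b = 0) (hmn : m ≤ n) :
    D^[n] b = 0 := by
  rw [← Nat.sub_add_cancel hmn, Function.iterate_add_apply, hm, ← coe_adAddMonoidHom,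
    iterate_map_zero]

theorem iterate_adOp_eq_zero_of_degAd_lt {b : A} (hb : ∃ n, D^[n] b = 0) {n : ℕ}
    (hn : degAd L₀ b < n) : D^[n] b = 0 := by
  obtain ⟨m, hm⟩ := hb
  have : D^[degAd L₀ b + 1] b = 0 :=
    Nat.sInf_mem (s := {n | D^[n + 1] b = 0}) ⟨m, iterate_adOp_eq_zero_of_le hm (by omega)⟩
  exact iterate_adOp_eq_zero_of_le this hn

theorem iterate_adOp_degAd_ne_zero {b : A} (hb0 : b ≠ 0) : D^[degAd L₀ b] b ≠ 0 := by
  obtain h | ⟨m, hm⟩ : degAd L₀ b = 0 ∨ ∃ m, degAd L₀ b = m + 1 := by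
    cases degAd L₀ b <;> simp
  · rwa [h]
  · rw [hm]
    exact Nat.notMem_of_lt_sInf (s := {n | D^[n + 1] b = 0}) (show m < degAd L₀ b by omega)

theorem iterate_adOp_eq_zero_iff {b : A} (hb0 : b ≠ 0) (hb : ∃ n, D^[n] b = 0) {n : ℕ} :
    D^[n] b = 0 ↔ degAd L₀ b < n := by
  refine ⟨fun h => ?_, iterate_adOp_eq_zero_of_degAd_lt hb⟩
  by_contra! hn
  exact iterate_adOp_degAd_ne_zero hb0 (iterate_adOp_eq_zero_of_le h hn)

theorem degAd_eq_of_forall_iterate_eq_zero_iff {b : A} {m : ℕ}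
    (h : ∀ n, D^[n] b = 0 ↔ m < n) : degAd L₀ b = m := by
  simp only [degAd, h, Nat.lt_succ_iff]
  exact csInf_Ici

theorem degAd_mul [IsDomain A] [CharZero A] {x y : A} (hx0 : x ≠ 0) (hy0 : y ≠ 0)
    (hx : ∃ n, D^[n] x = 0) (hy : ∃ n, D^[n] y = 0) :
    degAd L₀ (x * y) = degAd L₀ x + degAd L₀ y := by
  set dx := degAd L₀ x
  set dy := degAd L₀ y
  have hvanish : ∀ i j, dx < i ∨ dy < j → D^[i] x * D^[j] y = 0 := by
    rintro i j (hi | hj)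
    · rw [iterate_adOp_eq_zero_of_degAd_lt hx hi, zero_mul]
    · rw [iterate_adOp_eq_zero_of_degAd_lt hy hj, mul_zero]
  have htop : D^[dx + dy] (x * y) = (dx + dy).choose dx • (D^[dx] x * D^[dy] y) := by
    rw [iterate_adOp_mul, sum_eq_single (dx, dy)]
    · rintro ⟨i, j⟩ hij hne
      rw [hvanish i j ?_, smul_zero]
      rw [HasAntidiagonal.mem_antidiagonal] at hij
      by_contra! h
      exact hne (Prod.ext (by omega) (by omega))
    · simp
  have htop_ne : D^[dx + dy] (x * y) ≠ 0 := by
    rw [htop, nsmul_eq_mul]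
    exact mul_ne_zero (Nat.cast_ne_zero.mpr (Nat.choose_pos (by omega)).ne')
      (mul_ne_zero (iterate_adOp_degAd_ne_zero hx0) (iterate_adOp_degAd_ne_zero hy0))
  refine degAd_eq_of_forall_iterate_eq_zero_iff fun n => ⟨fun h => ?_, fun h => ?_⟩
  · by_contra! hn
    exact htop_ne (iterate_adOp_eq_zero_of_le h hn)
  · rw [iterate_adOp_mul]
    refine sum_eq_zero fun ⟨i, j⟩ hij => ?_
    rw [HasAntidiagonal.mem_antidiagonal] at hij
    rw [hvanish i j (by omega), smul_zero]

theorem degAd_add_le {x y : A} (hx : ∃ n, D^[n] x = 0) (hy : ∃ n, D^[n] y = 0) :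
    degAd L₀ (x + y) ≤ max (degAd L₀ x) (degAd L₀ y) := by
  refine Nat.sInf_le ?_
  rw [Set.mem_ofPred_eq, ← coe_adAddMonoidHom, iterate_map_add, coe_adAddMonoidHom,
    iterate_adOp_eq_zero_of_degAd_lt hx (by omega),
    iterate_adOp_eq_zero_of_degAd_lt hy (by omega), add_zero]

theorem degAd_adOp_add_one {b : A} (hDb : D b ≠ 0) (hb : ∃ n, D^[n] b = 0) :
    degAd L₀ (D b) + 1 = degAd L₀ b := by
  have hb0 : b ≠ 0 := fun h => hDb (by simp [h, adOp])
  have hpos : 0 < degAd L₀ b := by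
    have := (iterate_adOp_eq_zero_iff hb0 hb (n := 1)).not.mp hDb
    omega
  suffices degAd L₀ (D b) = degAd L₀ b - 1 by omega
  refine degAd_eq_of_forall_iterate_eq_zero_iff fun n => ?_
  rw [← Function.iterate_succ_apply, iterate_adOp_eq_zero_iff hb0 hb]
  omega

end AdOperator

section MulFunction

variable {A : Type*} [Ring A] [IsDomain A] {f : A → ℤ}

theorem map_neg_of_map_mul (hf : ∀ x y : A, x ≠ 0 → y ≠ 0 → f (x * y) = f x + f y) (a : A) :
    f (-a) = f a := by
  rcases eq_or_ne a 0 with rfl | ha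
  · rw [neg_zero]
  have h1 : f 1 = 0 := by simpa using hf 1 1 one_ne_zero one_ne_zero
  have hneg1 : f (-1) = 0 := by
    have := hf (-1) (-1) (neg_ne_zero.mpr one_ne_zero) (neg_ne_zero.mpr one_ne_zero)
    rw [neg_one_mul, neg_neg, h1] at this
    omega
  rw [← neg_one_mul, hf _ _ (neg_ne_zero.mpr one_ne_zero) ha, hneg1, zero_add]

theorem map_sub_le_of_map_mul (hf : ∀ x y : A, x ≠ 0 → y ≠ 0 → f (x * y) = f x + f y)
    (hf_add : ∀ x y : A, x ≠ 0 → y ≠ 0 → x + y ≠ 0 → f (x + y) ≤ max (f x) (f y))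
    {x y : A} {n : ℤ} (hxy : x - y ≠ 0) (hx : x ≠ 0 → f x ≤ n) (hy : y ≠ 0 → f y ≤ n) :
    f (x - y) ≤ n := by
  rcases eq_or_ne x 0 with rfl | hx0
  · rw [zero_sub, map_neg_of_map_mul hf]
    exact hy (by simpa using hxy)
  rcases eq_or_ne y 0 with rfl | hy0
  · simpa using hx hx0
  rw [sub_eq_add_neg] at hxy ⊢
  calc f (x + -y) ≤ max (f x) (f (-y)) := hf_add _ _ hx0 (neg_ne_zero.mpr hy0) hxy
    _ ≤ n := by rw [map_neg_of_map_mul hf]; exact max_le (hx hx0) (hy hy0)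

end MulFunction

section Extension

variable {A : Type*} [Ring A] {σ : Type*} [SetLike σ A] (B : σ) (hden : ∀ a : A, ∃ s ∈ B, IsUnit s ∧ s * a ∈ B)

include hden in
theorem exists_mul_eq_mul_of_isUnit (a : A) {t : A} (ht : IsUnit t) :
    ∃ v ∈ B, IsUnit v ∧ ∃ c ∈ B, v * a = c * t := by
  obtain ⟨v, hvB, hv, hc⟩ := hden (a * ↑ht.unit⁻¹)
  exact ⟨v, hvB, hv, _, hc, by simp [mul_assoc]⟩

noncomputable def extendDeg (d : A → ℤ) (a : A) : ℤ :=
  d ((hden a).choose * a) - d (hden a).choose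

variable [IsDomain A] {d : A → ℤ}

theorem eq_extendDeg_of_map_mul (d' : A → ℤ) (h0 : ∀ b ∈ B, b ≠ 0 → d' b = d b)
    (h1 : ∀ a₁ a₂ : A, a₁ ≠ 0 → a₂ ≠ 0 → d' (a₁ * a₂) = d' a₁ + d' a₂) {a : A} (ha : a ≠ 0) :
    d' a = extendDeg B hden d a := by
  obtain ⟨hsB, hs, hsa⟩ := (hden a).choose_spec
  rw [extendDeg, ← h0 _ hsa (mul_ne_zero hs.ne_zero ha), ← h0 _ hsB hs.ne_zero,
    h1 _ _ hs.ne_zero ha, add_sub_cancel_left]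

variable (hd : ∀ x ∈ B, ∀ y ∈ B, x ≠ 0 → y ≠ 0 → d (x * y) = d x + d y)
include hd

theorem extendDeg_eq_of_mul_mem {a r : A} (ha : a ≠ 0) (hr : r ∈ B) (hr0 : r ≠ 0)
    (hra : r * a ∈ B) : extendDeg B hden d a = d (r * a) - d r := by
  rw [extendDeg]
  obtain ⟨hsB, hs, hsa⟩ := (hden a).choose_spec
  set s := (hden a).choose
  obtain ⟨v, hvB, hv, c, hcB, hvc⟩ := exists_mul_eq_mul_of_isUnit B hden r hs
  have hvr0 : v * r ≠ 0 := mul_ne_zero hv.ne_zero hr0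
  have hc0 : c ≠ 0 := by rintro rfl; exact hvr0 (by rw [hvc, zero_mul])
  have h1 := hd v hvB r hr hv.ne_zero hr0
  have h2 := hd v hvB (r * a) hra hv.ne_zero (mul_ne_zero hr0 ha)
  have h3 := hd c hcB s hsB hc0 hs.ne_zero
  have h4 := hd c hcB (s * a) hsa hc0 (mul_ne_zero hs.ne_zero ha)
  rw [hvc] at h1
  rw [← mul_assoc, hvc, mul_assoc] at h2
  omega

theorem extendDeg_of_mem {b : A} (hb : b ∈ B) (hb0 : b ≠ 0) : extendDeg B hden d b = d b := by
  obtain ⟨hsB, hs, -⟩ := (hden b).choose_spec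
  rw [extendDeg, hd _ hsB b hb hs.ne_zero hb0, add_sub_cancel_left]

variable [SubringClass σ A]

theorem extendDeg_mul {a₁ a₂ : A} (ha₁ : a₁ ≠ 0) (ha₂ : a₂ ≠ 0) :
    extendDeg B hden d (a₁ * a₂) = extendDeg B hden d a₁ + extendDeg B hden d a₂ := by
  obtain ⟨s, hsB, hs, hb₁⟩ := hden a₁
  obtain ⟨t, htB, ht, hb₂⟩ := hden a₂
  obtain ⟨v, hvB, hv, c, hcB, hvc⟩ := exists_mul_eq_mul_of_isUnit B hden (s * a₁) ht
  have hb₁0 : s * a₁ ≠ 0 := mul_ne_zero hs.ne_zero ha₁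
  have hb₂0 : t * a₂ ≠ 0 := mul_ne_zero ht.ne_zero ha₂
  have hc0 : c ≠ 0 := by rintro rfl; exact mul_ne_zero hv.ne_zero hb₁0 (by rw [hvc, zero_mul])
  have hclear : v * s * (a₁ * a₂) = c * (t * a₂) := by
    rw [← mul_assoc c, ← hvc]; noncomm_ring
  rw [extendDeg_eq_of_mul_mem B hden hd (mul_ne_zero ha₁ ha₂) (mul_mem hvB hsB)
      (mul_ne_zero hv.ne_zero hs.ne_zero) (hclear ▸ mul_mem hcB hb₂),
    extendDeg_eq_of_mul_mem B hden hd ha₁ hsB hs.ne_zero hb₁,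
    extendDeg_eq_of_mul_mem B hden hd ha₂ htB ht.ne_zero hb₂, hclear,
    hd _ hcB _ hb₂ hc0 hb₂0, hd _ hvB _ hsB hv.ne_zero hs.ne_zero]
  have := hd _ hvB _ hb₁ hv.ne_zero hb₁0
  rw [hvc, hd _ hcB _ htB hc0 ht.ne_zero] at this
  omega

theorem extendDeg_add_le
    (hd_add : ∀ x ∈ B, ∀ y ∈ B, x ≠ 0 → y ≠ 0 → x + y ≠ 0 → d (x + y) ≤ max (d x) (d y))
    {a₁ a₂ : A} (ha₁ : a₁ ≠ 0) (ha₂ : a₂ ≠ 0) (ha : a₁ + a₂ ≠ 0) :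
    extendDeg B hden d (a₁ + a₂) ≤ max (extendDeg B hden d a₁) (extendDeg B hden d a₂) := by
  obtain ⟨s, hsB, hs, hsa₁⟩ := hden a₁
  obtain ⟨w, hwB, hw, hwsa₂⟩ := hden (s * a₂)
  have hr0 : w * s ≠ 0 := mul_ne_zero hw.ne_zero hs.ne_zero
  have hra₁ : w * s * a₁ ∈ B := by rw [mul_assoc]; exact mul_mem hwB hsa₁
  have hra₂ : w * s * a₂ ∈ B := by rwa [mul_assoc]
  have hrB : w * s ∈ B := mul_mem hwB hsB
  rw [extendDeg_eq_of_mul_mem B hden hd ha hrB hr0 (by rw [mul_add]; exact add_mem hra₁ hra₂),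
    extendDeg_eq_of_mul_mem B hden hd ha₁ hrB hr0 hra₁,
    extendDeg_eq_of_mul_mem B hden hd ha₂ hrB hr0 hra₂, max_sub_sub_right, mul_add]
  exact sub_le_sub_right (hd_add _ hra₁ _ hra₂ (mul_ne_zero hr0 ha₁) (mul_ne_zero hr0 ha₂)
    (by rw [← mul_add]; exact mul_ne_zero hr0 ha)) _

theorem extendDeg_map_le_sub_one (δ : A → A) (hδ : ∀ x y, δ (x * y) = δ x * y + x * δ y)
    (hδB : ∀ x ∈ B, δ x ∈ B) (hdδ : ∀ x ∈ B, x ≠ 0 → δ x ≠ 0 → d (δ x) ≤ d x - 1)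
    (hd_add : ∀ x ∈ B, ∀ y ∈ B, x ≠ 0 → y ≠ 0 → x + y ≠ 0 → d (x + y) ≤ max (d x) (d y))
    {a : A} (ha : a ≠ 0) (hδa : δ a ≠ 0) :
    extendDeg B hden d (δ a) ≤ extendDeg B hden d a - 1 := by
  set e := extendDeg B hden d
  have he_B : ∀ b ∈ B, b ≠ 0 → e b = d b := fun _ => extendDeg_of_mem B hden hd
  have he_mul : ∀ x y : A, x ≠ 0 → y ≠ 0 → e (x * y) = e x + e y :=
    fun _ _ => extendDeg_mul B hden hd
  have he_add : ∀ x y : A, x ≠ 0 → y ≠ 0 → x + y ≠ 0 → e (x + y) ≤ max (e x) (e y) :=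
    fun _ _ => extendDeg_add_le B hden hd hd_add
  obtain ⟨s, hsB, hs, hsa⟩ := hden a
  have hea : e a = d (s * a) - d s := extendDeg_eq_of_mul_mem B hden hd ha hsB hs.ne_zero hsa
  have hsplit : s * δ a = δ (s * a) - δ s * a := by rw [hδ]; abel
  have hbound : e (s * δ a) ≤ d (s * a) - 1 := by
    rw [hsplit]
    refine map_sub_le_of_map_mul he_mul he_add (hsplit ▸ mul_ne_zero hs.ne_zero hδa)
      (fun h => ?_) (fun h => ?_)
    · rw [he_B _ (hδB _ hsa) h]
      exact hdδ _ hsa (mul_ne_zero hs.ne_zero ha) h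
    · have hδs : δ s ≠ 0 := left_ne_zero_of_mul h
      rw [he_mul _ _ hδs ha, he_B _ (hδB _ hsB) hδs, hea]
      linarith [hdδ _ hsB hs.ne_zero hδs]
  rw [he_mul _ _ hs.ne_zero hδa, he_B _ hsB hs.ne_zero] at hbound
  omega

end Extension

theorem stmt2_general {k A : Type*} [Field k] [CharZero k] [Ring A] [IsDomain A] [Algebra k A]
    (B : Subalgebra k A)
    (S : Set A) (hSB : S ⊆ (B : Set A))
    (hSunit : ∀ s ∈ S, IsUnit s)
    (hleft : ∀ a : A, ∃ s ∈ S, s * a ∈ B)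
    (L₀ : A) (hL₀ : L₀ ∈ B)
    (hnil : ∀ b ∈ B, ∃ n : ℕ, (adOp L₀ L₀)^[n] b = 0) :
    ∃ deg : A → ℤ,
      (∀ b ∈ B, b ≠ 0 → deg b = degAd L₀ b) ∧
      (∀ a₁ a₂ : A, a₁ ≠ 0 → a₂ ≠ 0 → deg (a₁ * a₂) = deg a₁ + deg a₂) ∧
      (∀ deg' : A → ℤ,
        (∀ b ∈ B, b ≠ 0 → deg' b = degAd L₀ b) →
        (∀ a₁ a₂ : A, a₁ ≠ 0 → a₂ ≠ 0 → deg' (a₁ * a₂) = deg' a₁ + deg' a₂) →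
        ∀ a : A, a ≠ 0 → deg' a = deg a) ∧
      (∀ a₁ a₂ : A, a₁ ≠ 0 → a₂ ≠ 0 → a₁ + a₂ ≠ 0 →
        deg (a₁ + a₂) ≤ max (deg a₁) (deg a₂)) ∧
      (∀ a : A, a ≠ 0 → adOp L₀ L₀ a ≠ 0 → deg (adOp L₀ L₀ a) ≤ deg a - 1) := by
  have : CharZero A := charZero_of_injective_algebraMap (algebraMap k A).injective
  have hden : ∀ a : A, ∃ s ∈ B, IsUnit s ∧ s * a ∈ B := fun a =>
    let ⟨s, hs, hsa⟩ := hleft a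
    ⟨s, hSB hs, hSunit s hs, hsa⟩
  let d : A → ℤ := fun b => degAd L₀ b
  have hd : ∀ x ∈ B, ∀ y ∈ B, x ≠ 0 → y ≠ 0 → d (x * y) = d x + d y :=
    fun x hx y hy hx0 hy0 => by simp [d, degAd_mul hx0 hy0 (hnil x hx) (hnil y hy)]
  have hd_add : ∀ x ∈ B, ∀ y ∈ B, x ≠ 0 → y ≠ 0 → x + y ≠ 0 → d (x + y) ≤ max (d x) (d y) :=
    fun x hx y hy _ _ _ => by simpa [d] using degAd_add_le (hnil x hx) (hnil y hy)
  have hdδ : ∀ x ∈ B, x ≠ 0 → adOp L₀ L₀ x ≠ 0 → d (adOp L₀ L₀ x) ≤ d x - 1 :=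
    fun x hx _ hδx => by simp [d, ← degAd_adOp_add_one hδx (hnil x hx)]
  have hδB : ∀ x ∈ B, adOp L₀ L₀ x ∈ B :=
    fun x hx => sub_mem (mul_mem hL₀ hx) (mul_mem hx hL₀)
  refine ⟨extendDeg B hden d, fun b => extendDeg_of_mem B hden hd,
    fun _ _ => extendDeg_mul B hden hd, fun d' h0 h1 _ => eq_extendDeg_of_map_mul B hden d' h0 h1,
    fun _ _ => extendDeg_add_le B hden hd hd_add, fun _ => ?_⟩
  exact extendDeg_map_le_sub_one B hden hd _ (adOp_mul (L₀ := L₀)) hδB hdδ hd_add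

/-- Lemma 4.2 (filtl): the ad-nilpotent degree function extends uniquely from `B` to the
localization `A = B[S⁻¹]` as an additive-multiplicative degree function, which moreover is
subadditive on sums and drops under `ad_{L₀}`. -/
theorem stmt2 {k A : Type*} [Field k] [CharZero k] [Ring A] [IsDomain A] [Algebra k A]
    (B : Subalgebra k A)
    (S : Set A) (hSB : S ⊆ (B : Set A)) (hS0 : (0 : A) ∉ S)
    (hScomm : ∀ s ∈ S, ∀ t ∈ S, s * t = t * s)
    (hSmul : ∀ s ∈ S, ∀ t ∈ S, s * t ∈ S)
    (hSunit : ∀ s ∈ S, IsUnit s)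
    (hleft : ∀ a : A, ∃ s ∈ S, s * a ∈ B)
    (hright : ∀ a : A, ∃ s ∈ S, a * s ∈ B)
    (L₀ : A) (hL₀ : L₀ ∈ B)
    (hnil : ∀ b ∈ B, ∃ n : ℕ, (adOp L₀ L₀)^[n] b = 0) :
    ∃ deg : A → ℤ,
      (∀ b ∈ B, b ≠ 0 → deg b = degAd L₀ b) ∧
      (∀ a₁ a₂ : A, a₁ ≠ 0 → a₂ ≠ 0 → deg (a₁ * a₂) = deg a₁ + deg a₂) ∧
      (∀ deg' : A → ℤ,
        (∀ b ∈ B, b ≠ 0 → deg' b = degAd L₀ b) →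
        (∀ a₁ a₂ : A, a₁ ≠ 0 → a₂ ≠ 0 → deg' (a₁ * a₂) = deg' a₁ + deg' a₂) →
        ∀ a : A, a ≠ 0 → deg' a = deg a) ∧
      (∀ a₁ a₂ : A, a₁ ≠ 0 → a₂ ≠ 0 → a₁ + a₂ ≠ 0 →
        deg (a₁ + a₂) ≤ max (deg a₁) (deg a₂)) ∧
      (∀ a : A, a ≠ 0 → adOp L₀ L₀ a ≠ 0 → deg (adOp L₀ L₀ a) ≤ deg a - 1) :=
  stmt2_general B S hSB hSunit hleft L₀ hL₀ hnil
end

section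
/- Assume the Setup. Let L ∈ A satisfy condition (2) and let U ⊆ M be a k-subspace satisfying condition (1) for L with witness s ∈ S. Define 𝓜 := {a ∈ A : a·U₀ ⊆ U}. Then: (i) s·B ⊆ 𝓜, and s·a ∈ B for every a ∈ 𝓜; (ii) the operator ad_{L,L₀} maps 𝓜 into 𝓜 and acts locally nilpotently on 𝓜, i.e. for every a ∈ 𝓜 there is N ≥ 0 with ad_{L,L₀}^{N}(a) = 0. -/
/-- Condition (2) of Theorem 4.4: `L = L₀` or `deg(L - L₀) < 0`, expressed via some `s' ∈ S`
with `s'(L - L₀)` a nonzero element of `B` of `ad_{L₀}`-degree smaller than that of `s'`. -/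
def cond2 {k A : Type*} [CommSemiring k] [Ring A] [Algebra k A]
    (B : Subalgebra k A) (S : Set A) (L₀ L : A) : Prop :=
  L = L₀ ∨ ∃ s' ∈ S, s' * (L - L₀) ∈ B ∧ s' * (L - L₀) ≠ 0 ∧
    degAd L₀ (s' * (L - L₀)) < degAd L₀ s'

/-- A `k`-subspace of the `A`-module `M` (with `k` acting through `algebraMap k A`). -/
def isSubspace (k A : Type*) {M : Type*} [CommSemiring k] [Ring A] [Algebra k A]
    [AddCommGroup M] [Module A M] (U : Set M) : Prop :=
  (0 : M) ∈ U ∧ (∀ u ∈ U, ∀ v ∈ U, u + v ∈ U) ∧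
    (∀ c : k, ∀ u ∈ U, (algebraMap k A c) • u ∈ U)

/-!
Grade `A` by the nilpotency degree of `ad_{L₀}`: on the subring where `ad_{L₀}` is locally
nilpotent the Leibniz rule, in a domain of characteristic zero, makes this degree additive on
products, so it extends to fractions by `deg (t⁻¹ b) = deg b - deg t`, independently of the
chosen fraction because the denominators commute. The resulting filtration is multiplicative,
`ad_{L₀}` lowers it by one, and condition (2) says that `L - L₀` has negative degree; hence
`ad_{L,L₀} a = ad_{L₀} a + (L - L₀) a` lowers it too. On `𝓜` the degree is bounded below by
`-deg s`, because `s 𝓜 ⊆ B`, so iterating `ad_{L,L₀}` on `𝓜` ends in `0`.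
-/

open Finset

section Derivation

variable {A : Type*} [Ring A] {D : AddMonoid.End A} {x y : A} {m n : ℕ}

def IsNilpotentAt (D : AddMonoid.End A) (x : A) : Prop := ∃ n, (D ^ n) x = 0

noncomputable def nilDeg (D : AddMonoid.End A) (x : A) : ℕ := sInf {n | (D ^ (n + 1)) x = 0}

theorem pow_apply_eq_zero_of_le (h : (D ^ m) x = 0) (hmn : m ≤ n) : (D ^ n) x = 0 := by
  rw [← Nat.sub_add_cancel hmn, pow_add, AddMonoid.End.coe_mul, Function.comp_apply, h, map_zero]

theorem pow_apply_mul_of_leibniz (hD : ∀ x y, D (x * y) = D x * y + x * D y) (n : ℕ) (x y : A) :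
    (D ^ n) (x * y) = ∑ ij ∈ antidiagonal n, n.choose ij.1 • ((D ^ ij.1) x * (D ^ ij.2) y) := by
  induction n with
  | zero => simp
  | succ n ih =>
    rw [sum_antidiagonal_choose_succ_nsmul (fun i j => (D ^ i) x * (D ^ j) y) n]
    simp only [pow_succ', AddMonoid.End.coe_mul, Function.comp_apply, ih, map_sum, map_nsmul, hD,
      smul_add, sum_add_distrib]
    rw [add_comm]
    congr 1
    refine sum_congr rfl fun ij hij => ?_
    rw [n.choose_symm_of_eq_add (mem_antidiagonal.1 hij).symm]

theorem pow_apply_mul_of_pow_succ_eq_zero (hD : ∀ x y, D (x * y) = D x * y + x * D y) {p q : ℕ}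
    (hx : (D ^ (p + 1)) x = 0) (hy : (D ^ (q + 1)) y = 0) :
    (D ^ (p + q + 1)) (x * y) = 0 ∧
      (D ^ (p + q)) (x * y) = (p + q).choose p • ((D ^ p) x * (D ^ q) y) := by
  have term_eq_zero : ∀ i j, p < i ∨ q < j → (D ^ i) x * (D ^ j) y = 0 := by
    rintro i j (hi | hj)
    · rw [pow_apply_eq_zero_of_le hx hi, zero_mul]
    · rw [pow_apply_eq_zero_of_le hy hj, mul_zero]
  refine ⟨?_, ?_⟩
  · rw [pow_apply_mul_of_leibniz hD]
    refine sum_eq_zero fun ij hij => ?_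
    rw [term_eq_zero _ _ (by rw [HasAntidiagonal.mem_antidiagonal] at hij; omega), smul_zero]
  · rw [pow_apply_mul_of_leibniz hD, sum_eq_single (p, q)]
    · rintro ⟨i, j⟩ hij hne
      rw [HasAntidiagonal.mem_antidiagonal] at hij
      rw [term_eq_zero _ _ (by simp only [ne_eq, Prod.mk.injEq] at hne; omega), smul_zero]
    · simp

theorem IsNilpotentAt.exists_pow_succ_apply_eq_zero (h : IsNilpotentAt D x) :
    ∃ n, (D ^ (n + 1)) x = 0 :=
  h.imp fun _ hn => pow_apply_eq_zero_of_le hn (Nat.le_succ _)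

theorem IsNilpotentAt.mul (hD : ∀ x y, D (x * y) = D x * y + x * D y) (hx : IsNilpotentAt D x)
    (hy : IsNilpotentAt D y) : IsNilpotentAt D (x * y) := by
  obtain ⟨p, hp⟩ := hx.exists_pow_succ_apply_eq_zero
  obtain ⟨q, hq⟩ := hy.exists_pow_succ_apply_eq_zero
  exact ⟨p + q + 1, (pow_apply_mul_of_pow_succ_eq_zero hD hp hq).1⟩

theorem IsNilpotentAt.add (hx : IsNilpotentAt D x) (hy : IsNilpotentAt D y) :
    IsNilpotentAt D (x + y) := by
  obtain ⟨p, hp⟩ := hx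
  obtain ⟨q, hq⟩ := hy
  refine ⟨max p q, ?_⟩
  rw [map_add, pow_apply_eq_zero_of_le hp (le_max_left p q),
    pow_apply_eq_zero_of_le hq (le_max_right p q), add_zero]

theorem IsNilpotentAt.neg (hx : IsNilpotentAt D x) : IsNilpotentAt D (-x) :=
  hx.imp fun _ hn => by rw [map_neg, hn, neg_zero]

theorem IsNilpotentAt.apply (hx : IsNilpotentAt D x) : IsNilpotentAt D (D x) := by
  obtain ⟨n, hn⟩ := hx.exists_pow_succ_apply_eq_zero
  exact ⟨n, by rwa [pow_succ, AddMonoid.End.coe_mul, Function.comp_apply] at hn⟩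

theorem nilDeg_le (h : (D ^ (n + 1)) x = 0) : nilDeg D x ≤ n := Nat.sInf_le h

theorem pow_nilDeg_succ_apply (h : IsNilpotentAt D x) : (D ^ (nilDeg D x + 1)) x = 0 :=
  Nat.sInf_mem h.exists_pow_succ_apply_eq_zero

theorem pow_nilDeg_apply_ne_zero (hx : x ≠ 0) : (D ^ nilDeg D x) x ≠ 0 := by
  rcases h : nilDeg D x with _ | k
  · simpa using hx
  · intro hk
    have := nilDeg_le hk
    omega

theorem nilDeg_eq (h0 : (D ^ n) x ≠ 0) (h1 : (D ^ (n + 1)) x = 0) : nilDeg D x = n := by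
  refine le_antisymm (nilDeg_le h1) (not_lt.1 fun hlt => h0 ?_)
  exact pow_apply_eq_zero_of_le (pow_nilDeg_succ_apply ⟨_, h1⟩) hlt

theorem nilDeg_neg : nilDeg D (-x) = nilDeg D x := by
  simp only [nilDeg, map_neg, neg_eq_zero]

theorem nilDeg_add_le (hx : IsNilpotentAt D x) (hy : IsNilpotentAt D y) :
    nilDeg D (x + y) ≤ max (nilDeg D x) (nilDeg D y) := by
  refine nilDeg_le ?_
  rw [map_add, pow_apply_eq_zero_of_le (pow_nilDeg_succ_apply hx) (by omega),
    pow_apply_eq_zero_of_le (pow_nilDeg_succ_apply hy) (by omega), add_zero]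

theorem nilDeg_apply_lt (hx : IsNilpotentAt D x) (hDx : D x ≠ 0) : nilDeg D (D x) < nilDeg D x := by
  have hpos : nilDeg D x ≠ 0 := fun h0 => hDx (by simpa [h0] using pow_nilDeg_succ_apply hx)
  have : (D ^ (nilDeg D x - 1 + 1)) (D x) = (D ^ (nilDeg D x + 1)) x := by
    rw [Nat.sub_add_cancel (Nat.pos_of_ne_zero hpos), pow_succ D (nilDeg D x)]
    rfl
  have := nilDeg_le (this.trans (pow_nilDeg_succ_apply hx))
  omega

theorem nilDeg_mul [IsDomain A] [CharZero A] (hD : ∀ x y, D (x * y) = D x * y + x * D y)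
    (hx : IsNilpotentAt D x) (hy : IsNilpotentAt D y) (hx0 : x ≠ 0) (hy0 : y ≠ 0) :
    nilDeg D (x * y) = nilDeg D x + nilDeg D y := by
  obtain ⟨htop, hlead⟩ :=
    pow_apply_mul_of_pow_succ_eq_zero hD (pow_nilDeg_succ_apply hx) (pow_nilDeg_succ_apply hy)
  refine nilDeg_eq ?_ htop
  rw [hlead]
  exact smul_ne_zero (Nat.choose_pos (Nat.le_add_right _ _)).ne'
    (mul_ne_zero (pow_nilDeg_apply_ne_zero hx0) (pow_nilDeg_apply_ne_zero hy0))

end Derivation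

section Fractions

variable {A : Type*} [Ring A] {D : AddMonoid.End A} {S : Set A} {a t x y z : A} {m n : ℤ}

/-- `D` is a derivation and `A` consists of left and of right fractions, with commuting
denominators from `S`, of elements on which `D` is nilpotent. -/
structure NilFractions (D : AddMonoid.End A) (S : Set A) : Prop where
  leibniz : ∀ x y, D (x * y) = D x * y + x * D y
  ne_zero : ∀ t ∈ S, t ≠ 0
  isNilpotentAt : ∀ t ∈ S, IsNilpotentAt D t
  commute : ∀ s ∈ S, ∀ t ∈ S, Commute s t
  exists_left : ∀ a, ∃ t ∈ S, IsNilpotentAt D (t * a)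
  exists_right : ∀ a, ∃ t ∈ S, IsNilpotentAt D (a * t)

open Classical in
/-- The degree of the fraction `t⁻¹ (t a)`. -/
noncomputable def fracDeg (D : AddMonoid.End A) (S : Set A) (a : A) : ℤ :=
  if h : ∃ t ∈ S, IsNilpotentAt D (t * a) then nilDeg D (h.choose * a) - nilDeg D h.choose else 0

/-- `fracDeg D S 0` is a junk value, so `0` is put into every step by hand. -/
def filtration (D : AddMonoid.End A) (S : Set A) (n : ℤ) : Set A :=
  {z | z = 0 ∨ fracDeg D S z ≤ n}

theorem zero_mem_filtration : (0 : A) ∈ filtration D S n := Or.inl rfl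

theorem mem_filtration_fracDeg : z ∈ filtration D S (fracDeg D S z) := Or.inr le_rfl

theorem filtration_mono (h : m ≤ n) : filtration D S m ⊆ filtration D S n :=
  fun _ hz => hz.imp_right (·.trans h)

namespace NilFractions

variable [IsDomain A] [CharZero A]

theorem fracDeg_eq (hS : NilFractions D S) (ha : a ≠ 0) (ht : t ∈ S)
    (hta : IsNilpotentAt D (t * a)) :
    fracDeg D S a = nilDeg D (t * a) - nilDeg D t := by
  have h : ∃ t ∈ S, IsNilpotentAt D (t * a) := ⟨t, ht, hta⟩
  rw [fracDeg, dif_pos h]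
  obtain ⟨ht', ht'a⟩ := h.choose_spec
  set t' := h.choose
  have hswap : t' * (t * a) = t * (t' * a) := by
    rw [← mul_assoc, ← mul_assoc, (hS.commute t' ht' t ht).eq]
  have h1 := nilDeg_mul hS.leibniz (hS.isNilpotentAt t' ht') hta (hS.ne_zero t' ht')
    (mul_ne_zero (hS.ne_zero t ht) ha)
  have h2 := nilDeg_mul hS.leibniz (hS.isNilpotentAt t ht) ht'a (hS.ne_zero t ht)
    (mul_ne_zero (hS.ne_zero t' ht') ha)
  rw [hswap] at h1
  omega

theorem fracDeg_one (hS : NilFractions D S) : fracDeg D S 1 = 0 := by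
  obtain ⟨t, ht, ht1⟩ := hS.exists_left 1
  rw [hS.fracDeg_eq one_ne_zero ht ht1, mul_one, sub_self]

theorem fracDeg_mul_of_isNilpotentAt (hS : NilFractions D S) (hx : x ≠ 0)
    (hy : IsNilpotentAt D y) (hy0 : y ≠ 0) :
    fracDeg D S (x * y) = fracDeg D S x + nilDeg D y := by
  obtain ⟨t, ht, htx⟩ := hS.exists_left x
  have htx0 : t * x ≠ 0 := mul_ne_zero (hS.ne_zero t ht) hx
  have htxy : IsNilpotentAt D (t * (x * y)) := by rw [← mul_assoc]; exact htx.mul hS.leibniz hy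
  rw [hS.fracDeg_eq (mul_ne_zero hx hy0) ht htxy, hS.fracDeg_eq hx ht htx, ← mul_assoc,
    nilDeg_mul hS.leibniz htx hy htx0 hy0]
  push_cast
  ring

theorem fracDeg_of_isNilpotentAt (hS : NilFractions D S) (hy : IsNilpotentAt D y) (hy0 : y ≠ 0) :
    fracDeg D S y = nilDeg D y := by
  simpa [hS.fracDeg_one] using hS.fracDeg_mul_of_isNilpotentAt one_ne_zero hy hy0

theorem fracDeg_mul (hS : NilFractions D S) (hx : x ≠ 0) (hy : y ≠ 0) :
    fracDeg D S (x * y) = fracDeg D S x + fracDeg D S y := by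
  obtain ⟨u, hu, hyu⟩ := hS.exists_right y
  have hu0 := hS.ne_zero u hu
  have hyu0 : y * u ≠ 0 := mul_ne_zero hy hu0
  have h1 := hS.fracDeg_mul_of_isNilpotentAt (mul_ne_zero hx hy) (hS.isNilpotentAt u hu) hu0
  have h2 := hS.fracDeg_mul_of_isNilpotentAt hx hyu hyu0
  have h3 := hS.fracDeg_mul_of_isNilpotentAt hy (hS.isNilpotentAt u hu) hu0
  rw [mul_assoc] at h1
  rw [hS.fracDeg_of_isNilpotentAt hyu hyu0] at h3
  omega

theorem fracDeg_neg (hS : NilFractions D S) (ha : a ≠ 0) : fracDeg D S (-a) = fracDeg D S a := by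
  obtain ⟨t, ht, hta⟩ := hS.exists_left a
  have hta' : IsNilpotentAt D (t * -a) := by rw [mul_neg]; exact hta.neg
  rw [hS.fracDeg_eq (neg_ne_zero.2 ha) ht hta', hS.fracDeg_eq ha ht hta, mul_neg, nilDeg_neg]

theorem mul_mem_filtration (hS : NilFractions D S) (hx : x ∈ filtration D S m)
    (hy : y ∈ filtration D S n) : x * y ∈ filtration D S (m + n) := by
  by_cases hx0 : x = 0
  · simp [hx0, zero_mem_filtration]
  by_cases hy0 : y = 0
  · simp [hy0, zero_mem_filtration]
  refine Or.inr ?_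
  rw [hS.fracDeg_mul hx0 hy0]
  exact add_le_add (hx.resolve_left hx0) (hy.resolve_left hy0)

theorem neg_mem_filtration (hS : NilFractions D S) (hz : z ∈ filtration D S n) :
    -z ∈ filtration D S n := by
  by_cases hz0 : z = 0
  · simp [hz0, zero_mem_filtration]
  exact Or.inr (by rw [hS.fracDeg_neg hz0]; exact hz.resolve_left hz0)

/-- After multiplying by a common denominator `u t` this is `nilDeg_add_le`. -/
theorem add_mem_filtration (hS : NilFractions D S) (hx : x ∈ filtration D S n)
    (hy : y ∈ filtration D S n) : x + y ∈ filtration D S n := by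
  by_cases hx0 : x = 0
  · simpa [hx0] using hy
  by_cases hy0 : y = 0
  · simpa [hy0] using hx
  by_cases hxy0 : x + y = 0
  · exact Or.inl hxy0
  replace hx := hx.resolve_left hx0
  replace hy := hy.resolve_left hy0
  obtain ⟨t, ht, htx⟩ := hS.exists_left x
  obtain ⟨u, hu, hut⟩ := hS.exists_left (t * y)
  have hw0 : u * t ≠ 0 := mul_ne_zero (hS.ne_zero u hu) (hS.ne_zero t ht)
  have hwx : IsNilpotentAt D (u * t * x) := by
    rw [mul_assoc]; exact (hS.isNilpotentAt u hu).mul hS.leibniz htx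
  have hwy : IsNilpotentAt D (u * t * y) := by rwa [mul_assoc]
  have hdeg : ∀ z ≠ 0, IsNilpotentAt D (u * t * z) →
      fracDeg D S (u * t) + fracDeg D S z = nilDeg D (u * t * z) := fun z hz hwz => by
    rw [← hS.fracDeg_mul hw0 hz, hS.fracDeg_of_isNilpotentAt hwz (mul_ne_zero hw0 hz)]
  have hx' := hdeg x hx0 hwx
  have hy' := hdeg y hy0 hwy
  have hxy' := hdeg (x + y) hxy0 (by rw [mul_add]; exact hwx.add hwy)
  have hmax := nilDeg_add_le hwx hwy
  rw [← mul_add] at hmax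
  exact Or.inr (by omega)

theorem sub_mem_filtration (hS : NilFractions D S) (hx : x ∈ filtration D S n)
    (hy : y ∈ filtration D S n) : x - y ∈ filtration D S n := by
  simpa [sub_eq_add_neg] using hS.add_mem_filtration hx (hS.neg_mem_filtration hy)

theorem mem_filtration_of_mul_left (hS : NilFractions D S) (ht : t ≠ 0)
    (h : t * z ∈ filtration D S (fracDeg D S t + n)) : z ∈ filtration D S n := by
  by_cases hz0 : z = 0
  · exact Or.inl hz0
  have := h.resolve_left (mul_ne_zero ht hz0)
  rw [hS.fracDeg_mul ht hz0] at this
  exact Or.inr (by omega)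

theorem mem_filtration_nilDeg (hS : NilFractions D S) (hz : IsNilpotentAt D z) :
    z ∈ filtration D S (nilDeg D z) := by
  by_cases hz0 : z = 0
  · exact Or.inl hz0
  exact Or.inr (hS.fracDeg_of_isNilpotentAt hz hz0).le

theorem apply_mem_filtration_nilDeg_sub_one (hS : NilFractions D S) (hz : IsNilpotentAt D z) :
    D z ∈ filtration D S (nilDeg D z - 1) := by
  by_cases hDz : D z = 0
  · exact Or.inl hDz
  refine filtration_mono ?_ (hS.mem_filtration_nilDeg hz.apply)
  have := nilDeg_apply_lt hz hDz
  omega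

/-- Clearing a denominator, `t * D z = D (t * z) - D t * z`, and on nilpotent elements `D` lowers
`nilDeg`. -/
theorem apply_mem_filtration (hS : NilFractions D S) (hz : z ∈ filtration D S n) :
    D z ∈ filtration D S (n - 1) := by
  by_cases hz0 : z = 0
  · simp [hz0, zero_mem_filtration]
  obtain ⟨t, ht, htz⟩ := hS.exists_left z
  have htN := hS.isNilpotentAt t ht
  have ht0 := hS.ne_zero t ht
  have hdeg_tz : (nilDeg D (t * z) : ℤ) ≤ nilDeg D t + n := by
    have := hS.fracDeg_eq hz0 ht htz
    have := hz.resolve_left hz0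
    omega
  have hclear : t * D z = D (t * z) - D t * z := by rw [hS.leibniz]; abel
  refine hS.mem_filtration_of_mul_left ht0 ?_
  rw [hclear, hS.fracDeg_of_isNilpotentAt htN ht0]
  refine hS.sub_mem_filtration ?_ ?_
  · exact filtration_mono (by omega) (hS.apply_mem_filtration_nilDeg_sub_one htz)
  · exact filtration_mono (by omega) (hS.mul_mem_filtration
      (hS.apply_mem_filtration_nilDeg_sub_one htN) hz)

theorem eq_zero_of_mem_filtration (hS : NilFractions D S) (ht : t ∈ S)
    (hta : IsNilpotentAt D (t * a)) (ha : a ∈ filtration D S n) (hn : n < -nilDeg D t) :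
    a = 0 := by
  by_contra ha0
  have hle := ha.resolve_left ha0
  rw [hS.fracDeg_eq ha0 ht hta] at hle
  omega

/-- The orbit of `a` sinks through the filtration, while `t * T^[N] a` nilpotent bounds its
`fracDeg` below by `-nilDeg t`. -/
theorem exists_iterate_eq_zero (hS : NilFractions D S) {T : A → A}
    (hT : ∀ n z, z ∈ filtration D S n → T z ∈ filtration D S (n - 1)) (ht : t ∈ S)
    (ha : ∀ N, IsNilpotentAt D (t * T^[N] a)) : ∃ N, T^[N] a = 0 := by
  have hiter : ∀ N : ℕ, T^[N] a ∈ filtration D S (fracDeg D S a - N) := by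
    intro N
    induction N with
    | zero => simpa using mem_filtration_fracDeg
    | succ N ih =>
      rw [Function.iterate_succ_apply', Nat.cast_succ, ← sub_sub]
      exact hT _ _ ih
  refine ⟨(fracDeg D S a + nilDeg D t + 1).toNat,
    hS.eq_zero_of_mem_filtration ht (ha _) (hiter _) ?_⟩
  have := Int.self_le_toNat (fracDeg D S a + nilDeg D t + 1)
  omega

end NilFractions

end Fractions

section Ad

variable {A : Type*} [Ring A]

/-- `⇑(adEnd L₀)` is `adOp L₀ L₀` and `⇑(adEnd L₀ ^ n)` is `(adOp L₀ L₀)^[n]`, both by `rfl`;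
in particular `degAd L₀ = nilDeg (adEnd L₀)` definitionally. -/
def adEnd (L₀ : A) : AddMonoid.End A := AddMonoidHom.mulLeft L₀ - AddMonoidHom.mulRight L₀

theorem adEnd_mul (L₀ x y : A) : adEnd L₀ (x * y) = adEnd L₀ x * y + x * adEnd L₀ y := by
  change L₀ * (x * y) - x * y * L₀ = (L₀ * x - x * L₀) * y + x * (L₀ * y - y * L₀)
  noncomm_ring

theorem adOp_eq_adEnd_add (L L₀ a : A) : adOp L L₀ a = adEnd L₀ a + (L - L₀) * a := by
  change L * a - a * L₀ = L₀ * a - a * L₀ + (L - L₀) * a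
  noncomm_ring

variable [IsDomain A] [CharZero A] {S : Set A} {L₀ L a : A} {n : ℤ}

theorem cond2.sub_mem_filtration {k : Type*} [CommSemiring k] [Algebra k A] {B : Subalgebra k A}
    (h : cond2 B S L₀ L) (hS : NilFractions (adEnd L₀) S)
    (hB : ∀ b ∈ B, IsNilpotentAt (adEnd L₀) b) : L - L₀ ∈ filtration (adEnd L₀) S (-1) := by
  rcases h with rfl | ⟨s', hs', hs'B, hne, hdeg⟩
  · simpa using zero_mem_filtration
  have hdeg' : nilDeg (adEnd L₀) (s' * (L - L₀)) < nilDeg (adEnd L₀) s' := hdeg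
  refine Or.inr ?_
  rw [hS.fracDeg_eq (right_ne_zero_of_mul hne) hs' (hB _ hs'B)]
  omega

theorem NilFractions.adOp_mem_filtration (hS : NilFractions (adEnd L₀) S)
    (hL : L - L₀ ∈ filtration (adEnd L₀) S (-1)) (ha : a ∈ filtration (adEnd L₀) S n) :
    adOp L L₀ a ∈ filtration (adEnd L₀) S (n - 1) := by
  rw [adOp_eq_adEnd_add]
  exact hS.add_mem_filtration (hS.apply_mem_filtration ha)
    (by simpa [neg_add_eq_sub] using hS.mul_mem_filtration hL ha)

end Ad

theorem isSubspace.sub_mem {k A M : Type*} [CommRing k] [Ring A] [Algebra k A] [AddCommGroup M]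
    [Module A M] {U : Set M} (hU : isSubspace k A U) {u v : M} (hu : u ∈ U) (hv : v ∈ U) :
    u - v ∈ U := by
  obtain ⟨-, hadd, hsmul⟩ := hU
  simpa [sub_eq_add_neg] using hadd u hu _ (hsmul (-1) v hv)

theorem stmt7_general
    {k A M : Type*} [Field k] [CharZero k] [Ring A] [IsDomain A] [Algebra k A]
    [AddCommGroup M] [Module A M]
    (B R : Subalgebra k A) (hRB : R ≤ B)
    (hRcomm : ∀ x ∈ R, ∀ y ∈ R, x * y = y * x)
    (S : Set A) (hSR : S ⊆ (R : Set A)) (hS0 : (0 : A) ∉ S)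
    (hleft : ∀ a : A, ∃ s ∈ S, s * a ∈ B)
    (hright : ∀ a : A, ∃ s ∈ S, a * s ∈ B)
    (U₀ : Set M)
    (hB : ∀ a : A, a ∈ B ↔ ∀ u ∈ U₀, a • u ∈ U₀)
    (L₀ : A) (hL₀ : L₀ ∈ B)
    (hnil : ∀ b ∈ B, ∃ n : ℕ, (adOp L₀ L₀)^[n] b = 0)
    (L : A) (h2 : cond2 B S L₀ L)
    (U : Set M) (hU : isSubspace k A U)
    (hLU : ∀ u ∈ U, L • u ∈ U)
    (s : A) (hs : s ∈ S)
    (hsU₀ : ∀ u ∈ U₀, s • u ∈ U) (hsU : ∀ u ∈ U, s • u ∈ U₀) :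
    (∀ b ∈ B, s * b ∈ {a : A | ∀ u ∈ U₀, a • u ∈ U}) ∧
    (∀ a ∈ {a : A | ∀ u ∈ U₀, a • u ∈ U}, s * a ∈ B) ∧
    (∀ a ∈ {a : A | ∀ u ∈ U₀, a • u ∈ U}, adOp L L₀ a ∈ {a : A | ∀ u ∈ U₀, a • u ∈ U}) ∧
    (∀ a ∈ {a : A | ∀ u ∈ U₀, a • u ∈ U}, ∃ N : ℕ, (adOp L L₀)^[N] a = 0) := by
  have : CharZero A := charZero_of_injective_algebraMap (algebraMap k A).injective
  have hBnil : ∀ b ∈ B, IsNilpotentAt (adEnd L₀) b := hnil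
  have hS : NilFractions (adEnd L₀) S :=
    { leibniz := adEnd_mul L₀
      ne_zero := fun t ht h => hS0 (h ▸ ht)
      isNilpotentAt := fun t ht => hBnil t (hRB (hSR ht))
      commute := fun s hs t ht => hRcomm s (hSR hs) t (hSR ht)
      exists_left := fun a => (hleft a).imp fun _ ⟨ht, hta⟩ => ⟨ht, hBnil _ hta⟩
      exists_right := fun a => (hright a).imp fun _ ⟨ht, hat⟩ => ⟨ht, hBnil _ hat⟩ }
  set 𝓜 := {a : A | ∀ u ∈ U₀, a • u ∈ U}
  have hs𝓜 : ∀ a ∈ 𝓜, s * a ∈ B := fun a ha =>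
    (hB _).2 fun u hu => by rw [mul_smul]; exact hsU _ (ha u hu)
  have hmaps : Set.MapsTo (adOp L L₀) 𝓜 𝓜 := fun a ha u hu => by
    rw [adOp, sub_smul, mul_smul, mul_smul]
    exact hU.sub_mem (hLU _ (ha u hu)) (ha _ ((hB L₀).1 hL₀ u hu))
  refine ⟨fun b hb u hu => ?_, hs𝓜, fun a ha => hmaps ha, fun a ha => ?_⟩
  · rw [mul_smul]
    exact hsU₀ _ ((hB b).1 hb u hu)
  · exact hS.exists_iterate_eq_zero
      (fun _ _ => hS.adOp_mem_filtration (h2.sub_mem_filtration hS hBnil)) hs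
      (fun N => hBnil _ (hs𝓜 _ (hmaps.iterate N ha)))

/-- Key step in the proof of Theorem 4.4: for `𝓜 = {a ∈ A : a·U₀ ⊆ U}` one has
`s·B ⊆ 𝓜 ⊆ s⁻¹·B`, and `ad_{L,L₀}` maps `𝓜` to itself and acts locally nilpotently on it. -/
theorem stmt7
    {k A M : Type*} [Field k] [CharZero k] [Ring A] [IsDomain A] [Algebra k A]
    [AddCommGroup M] [Module A M]
    (B R : Subalgebra k A) (hRB : R ≤ B)
    (hRcomm : ∀ x ∈ R, ∀ y ∈ R, x * y = y * x)
    (S : Set A) (hSR : S ⊆ (R : Set A)) (hS0 : (0 : A) ∉ S) (hS1 : (1 : A) ∈ S)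
    (hSmul : ∀ s ∈ S, ∀ t ∈ S, s * t ∈ S)
    (hSunit : ∀ s ∈ S, IsUnit s)
    (hleft : ∀ a : A, ∃ s ∈ S, s * a ∈ B)
    (hright : ∀ a : A, ∃ s ∈ S, a * s ∈ B)
    (U₀ : Set M) (hU₀0 : (0 : M) ∈ U₀)
    (hU₀add : ∀ u ∈ U₀, ∀ v ∈ U₀, u + v ∈ U₀)
    (hU₀neg : ∀ u ∈ U₀, -u ∈ U₀)
    (hU₀R : ∀ r ∈ (R : Set A), ∀ u ∈ U₀, r • u ∈ U₀)
    (hB : ∀ a : A, a ∈ B ↔ ∀ u ∈ U₀, a • u ∈ U₀)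
    (L₀ : A) (hL₀ : L₀ ∈ B)
    (hnil : ∀ b ∈ B, ∃ n : ℕ, (adOp L₀ L₀)^[n] b = 0)
    (L : A) (h2 : cond2 B S L₀ L)
    (U : Set M) (hU : isSubspace k A U)
    (hLU : ∀ u ∈ U, L • u ∈ U)
    (s : A) (hs : s ∈ S)
    (hsU₀ : ∀ u ∈ U₀, s • u ∈ U) (hsU : ∀ u ∈ U, s • u ∈ U₀) :
    (∀ b ∈ B, s * b ∈ {a : A | ∀ u ∈ U₀, a • u ∈ U}) ∧
    (∀ a ∈ {a : A | ∀ u ∈ U₀, a • u ∈ U}, s * a ∈ B) ∧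
    (∀ a ∈ {a : A | ∀ u ∈ U₀, a • u ∈ U}, adOp L L₀ a ∈ {a : A | ∀ u ∈ U₀, a • u ∈ U}) ∧
    (∀ a ∈ {a : A | ∀ u ∈ U₀, a • u ∈ U}, ∃ N : ℕ, (adOp L L₀)^[N] a = 0) :=
  stmt7_general B R hRB hRcomm S hSR hS0 hleft hright U₀ hB L₀ hL₀ hnil L h2 U hU hLU s hs hsU₀ hsU
end

section
/- Assume the Setup. If L ∈ B and there exists a nonzero D ∈ A with L·D = D·L₀, then L = L₀. -/
/-!
Write `X = L - L₀` and `ad = ad_{L₀}`. The relation `L D = D L₀` gives `ad (y D) = ad_{L₀,L}(y) D`,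
and `ad_{L₀,L}(y) = ad y - y X`. If `X ≠ 0`, it has some exact `ad`-degree `d`, and by the Leibniz
rule (characteristic zero, no zero divisors) `ad_{L₀,L}` raises the exact `ad`-degree of a
nilpotent element by `d`, so never kills it. Choosing `s ∈ S` with `s D ∈ B`, the elements
`ad^n (s D) = ad_{L₀,L}^n(s) D` are then all nonzero, contradicting local nilpotency on `B`.
-/

open Finset

section AdNilpotent

variable {A : Type*} [Ring A]

lemma adOp_self_eq_coe (a : A) :
    adOp a a = ⇑(AddMonoidHom.mulLeft a - AddMonoidHom.mulRight a) := rfl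

lemma adOp_self_mul (a x y : A) : adOp a a (x * y) = adOp a a x * y + x * adOp a a y := by
  simp only [adOp]; noncomm_ring

lemma adOp_eq_adOp_self_sub (a b y : A) : adOp a b y = adOp a a y - y * (b - a) := by
  simp only [adOp]; noncomm_ring

lemma adOp_self_sum_nsmul {ι : Type*} (a : A) (s : Finset ι) (c : ι → ℕ) (f : ι → A) :
    adOp a a (∑ i ∈ s, c i • f i) = ∑ i ∈ s, c i • adOp a a (f i) := by
  simp only [adOp_self_eq_coe, map_sum, map_nsmul]

lemma iterate_adOp_self_eq_zero_of_le {a x : A} {m n : ℕ} (h : (adOp a a)^[m] x = 0)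
    (hmn : m ≤ n) : (adOp a a)^[n] x = 0 := by
  obtain ⟨k, rfl⟩ := Nat.exists_eq_add_of_le hmn
  rw [add_comm, Function.iterate_add_apply, h, adOp_self_eq_coe, iterate_map_zero]

theorem iterate_adOp_self_mul (a x y : A) (n : ℕ) :
    (adOp a a)^[n] (x * y) =
      ∑ ij ∈ antidiagonal n, n.choose ij.1 • ((adOp a a)^[ij.1] x * (adOp a a)^[ij.2] y) := by
  induction n with
  | zero => simp
  | succ n ih =>
    rw [sum_antidiagonal_choose_succ_nsmul (fun i j => (adOp a a)^[i] x * (adOp a a)^[j] y) n,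
      Function.iterate_succ_apply', ih, adOp_self_sum_nsmul]
    simp only [adOp_self_mul, smul_add, sum_add_distrib, Function.iterate_succ_apply', add_comm]
    congr 1
    refine sum_congr rfl fun ⟨i, j⟩ hij ↦ ?_
    rw [n.choose_symm_of_eq_add (mem_antidiagonal.1 hij).symm]

theorem iterate_adOp_self_mul_of_iterate_eq_zero {a x y : A} {m n : ℕ}
    (hx : (adOp a a)^[m + 1] x = 0) (hy : (adOp a a)^[n + 1] y = 0) :
    (adOp a a)^[m + n] (x * y) = (m + n).choose m • ((adOp a a)^[m] x * (adOp a a)^[n] y) := by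
  rw [iterate_adOp_self_mul, sum_eq_single_of_mem (m, n) (mem_antidiagonal.2 rfl)]
  rintro ⟨i, j⟩ hij hne
  rw [HasAntidiagonal.mem_antidiagonal] at hij
  rcases lt_or_ge m i with hi | hi
  · rw [iterate_adOp_self_eq_zero_of_le hx hi, zero_mul, smul_zero]
  · have hj : n + 1 ≤ j := by
      by_contra! hj
      exact hne (Prod.ext (by omega) (by omega))
    rw [iterate_adOp_self_eq_zero_of_le hy hj, mul_zero, smul_zero]

lemma adOp_mul_of_mul_eq_mul {b c D : A} (h : b * D = D * c) (a y : A) :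
    adOp a c (y * D) = adOp a b y * D := by
  simp only [adOp, sub_mul, mul_assoc, h]

lemma iterate_adOp_mul_of_mul_eq_mul {b c D : A} (h : b * D = D * c) (a y : A) (n : ℕ) :
    (adOp a c)^[n] (y * D) = (adOp a b)^[n] y * D :=
  (Function.Semiconj.iterate_right (f := (· * D)) (fun y ↦ (adOp_mul_of_mul_eq_mul h a y).symm)
    n y).symm

def HasAdDegree (a x : A) (m : ℕ) : Prop :=
  (adOp a a)^[m] x ≠ 0 ∧ (adOp a a)^[m + 1] x = 0

lemma exists_hasAdDegree {a x : A} (hx : x ≠ 0) (h : ∃ n, (adOp a a)^[n] x = 0) :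
    ∃ m, HasAdDegree a x m := by
  classical
  obtain ⟨m, hm⟩ := Nat.exists_eq_add_one_of_ne_zero (n := Nat.find h) fun h0 ↦
    hx (by simpa [h0] using Nat.find_spec h)
  exact ⟨m, Nat.find_min h (by omega), hm ▸ Nat.find_spec h⟩

namespace HasAdDegree

variable {a x y : A} {m n : ℕ}

lemma ne_zero (h : HasAdDegree a x m) : x ≠ 0 := by
  rintro rfl
  exact h.1 (by rw [adOp_self_eq_coe, iterate_map_zero])

lemma sub_of_iterate_eq_zero (hx : HasAdDegree a x m) (hy : (adOp a a)^[m] y = 0) :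
    HasAdDegree a (y - x) m := by
  have hy' : (adOp a a)^[m + 1] y = 0 := iterate_adOp_self_eq_zero_of_le hy m.le_succ
  simp only [HasAdDegree, adOp_self_eq_coe, iterate_map_sub] at hx hy hy' ⊢
  rw [hy, hy', zero_sub, zero_sub, neg_ne_zero, neg_eq_zero]
  exact hx

variable [IsDomain A] [CharZero A]

lemma mul (hx : HasAdDegree a x m) (hy : HasAdDegree a y n) : HasAdDegree a (x * y) (m + n) := by
  refine ⟨?_, ?_⟩
  · rw [iterate_adOp_self_mul_of_iterate_eq_zero hx.2 hy.2]
    exact smul_ne_zero (Nat.choose_pos (m.le_add_right n)).ne' (mul_ne_zero hx.1 hy.1)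
  · rw [add_right_comm, iterate_adOp_self_mul_of_iterate_eq_zero
      (iterate_adOp_self_eq_zero_of_le hx.2 (m + 1).le_succ) hy.2, hx.2, zero_mul, smul_zero]

lemma adOp (hx : HasAdDegree a x m) {b : A} (hba : HasAdDegree a (b - a) n) :
    HasAdDegree a (adOp a b x) (m + n) := by
  rw [adOp_eq_adOp_self_sub]
  refine (hx.mul hba).sub_of_iterate_eq_zero ?_
  rw [← Function.iterate_succ_apply]
  exact iterate_adOp_self_eq_zero_of_le hx.2 (by omega)

end HasAdDegree

theorem eq_of_mul_eq_mul_of_adOp_nilpotent [IsDomain A] [CharZero A] {L₀ L D s : A}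
    (hD : D ≠ 0) (hLD : L * D = D * L₀) (hs : s ≠ 0)
    (hs_nil : ∃ n, (adOp L₀ L₀)^[n] s = 0) (hsD_nil : ∃ n, (adOp L₀ L₀)^[n] (s * D) = 0)
    (hX_nil : ∃ n, (adOp L₀ L₀)^[n] (L - L₀) = 0) : L = L₀ := by
  by_contra hne
  obtain ⟨d, hd⟩ := exists_hasAdDegree (sub_ne_zero.2 hne) hX_nil
  obtain ⟨m, hm⟩ := exists_hasAdDegree hs hs_nil
  have hdeg : ∀ n, HasAdDegree L₀ ((adOp L₀ L)^[n] s) (m + n * d) := by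
    intro n
    induction n with
    | zero => simpa using hm
    | succ n ih =>
      rw [Function.iterate_succ_apply', add_one_mul, ← add_assoc]
      exact ih.adOp hd
  obtain ⟨N, hN⟩ := hsD_nil
  rw [iterate_adOp_mul_of_mul_eq_mul hLD] at hN
  exact mul_ne_zero (hdeg N).ne_zero hD hN

end AdNilpotent

theorem stmt10_general
    {k A : Type*} [Field k] [CharZero k] [Ring A] [IsDomain A] [Algebra k A]
    (B R : Subalgebra k A) (hRB : R ≤ B)
    (S : Set A) (hSR : S ⊆ (R : Set A)) (hS0 : (0 : A) ∉ S)
    (hleft : ∀ a : A, ∃ s ∈ S, s * a ∈ B)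
    (L₀ : A) (hL₀ : L₀ ∈ B)
    (hnil : ∀ b ∈ B, ∃ n : ℕ, (adOp L₀ L₀)^[n] b = 0)
    (L : A) (hL : L ∈ B) (D : A) (hD : D ≠ 0) (hLD : L * D = D * L₀) :
    L = L₀ := by
  have : CharZero A := charZero_of_injective_algebraMap (algebraMap k A).injective
  obtain ⟨s, hsS, hsD⟩ := hleft D
  exact eq_of_mul_eq_mul_of_adOp_nilpotent hD hLD (fun hs ↦ hS0 (hs ▸ hsS))
    (hnil s (hRB (hSR hsS))) (hnil _ hsD) (hnil _ (B.sub_mem hL hL₀))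

/-- Remark 4.6: if `L ∈ B` (i.e. `L` preserves `U₀`) and `L·D = D·L₀` for some nonzero `D ∈ A`,
then `L = L₀`. -/
theorem stmt10
    {k A M : Type*} [Field k] [CharZero k] [Ring A] [IsDomain A] [Algebra k A]
    [AddCommGroup M] [Module A M]
    (B R : Subalgebra k A) (hRB : R ≤ B)
    (hRcomm : ∀ x ∈ R, ∀ y ∈ R, x * y = y * x)
    (S : Set A) (hSR : S ⊆ (R : Set A)) (hS0 : (0 : A) ∉ S) (hS1 : (1 : A) ∈ S)
    (hSmul : ∀ s ∈ S, ∀ t ∈ S, s * t ∈ S)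
    (hSunit : ∀ s ∈ S, IsUnit s)
    (hleft : ∀ a : A, ∃ s ∈ S, s * a ∈ B)
    (hright : ∀ a : A, ∃ s ∈ S, a * s ∈ B)
    (U₀ : Set M) (hU₀0 : (0 : M) ∈ U₀)
    (hU₀add : ∀ u ∈ U₀, ∀ v ∈ U₀, u + v ∈ U₀)
    (hU₀neg : ∀ u ∈ U₀, -u ∈ U₀)
    (hU₀R : ∀ r ∈ (R : Set A), ∀ u ∈ U₀, r • u ∈ U₀)
    (hB : ∀ a : A, a ∈ B ↔ ∀ u ∈ U₀, a • u ∈ U₀)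
    (L₀ : A) (hL₀ : L₀ ∈ B)
    (hnil : ∀ b ∈ B, ∃ n : ℕ, (adOp L₀ L₀)^[n] b = 0)
    (L : A) (hL : L ∈ B) (D : A) (hD : D ≠ 0) (hLD : L * D = D * L₀) :
    L = L₀ :=
  stmt10_general B R hRB S hSR hS0 hleft L₀ hL₀ hnil L hL D hD hLD
end
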